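/- (Palais–Smale condition, localized.) Let (x_h,w_h) be a sequence in 𝒪 ∩ H_W which is bounded in H, whose paths γ_h := γ_{x_h,w_h} converge uniformly on [0,1] to a continuous curve with image contained in U, and such that the dual norms ‖DS_L^W(x_h,w_h)‖ (the norm of the restriction of DS_L(x_h,w_h) to H_W) tend to 0. Then (x_h,w_h) converges strongly in H to some (x,w) ∈ 𝒪 ∩ H_W whose path γ_{x,w} is the uniform limit of the γ_h. -/

import Mathlib

open MeasureTheory Set Filter Topology ContDiff
open scoped RealInnerProductSpace

noncomputable section

/-- Euclidean space `ℝ^n`. -/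
abbrev E (n : ℕ) : Type := EuclideanSpace ℝ (Fin n)

/-- Lebesgue measure restricted to the interval `[0,1]`. -/
abbrev μ01 : Measure ℝ := volume.restrict (Set.Icc (0:ℝ) 1)

instance : IsFiniteMeasure μ01 :=
  ⟨by rw [Measure.restrict_apply_univ]; simp [Real.volume_Icc]⟩

/-- The Hilbert space `H = ℝ^n × L²([0,1],ℝ^n)`, the standard model of `H¹([0,1],ℝ^n)`
via `u ↦ (u 0, u')`. -/
abbrev Hsp (n : ℕ) : Type := E n × Lp (E n) 2 μ01

variable {n : ℕ}

/-- The absolutely continuous path associated to `(x,w) ∈ H`:  `t ↦ x + ∫_0^t w(s) ds`. -/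
def pathH (p : Hsp n) : ℝ → E n :=
  fun t => p.1 + ∫ s in Set.Ioc (0:ℝ) t, p.2 s ∂μ01

/-- The open set `𝒪 ⊆ H` of those `(x,w)` whose path stays in `U`. -/
def actO (U : Set (E n)) : Set (Hsp n) :=
  {p | ∀ t ∈ Set.Icc (0:ℝ) 1, pathH p t ∈ U}

/-- The Lagrangian action functional `S_L`. -/
def action (L : ℝ → E n → E n → ℝ) (p : Hsp n) : ℝ :=
  ∫ t, L t (pathH p t) (p.2 t) ∂μ01

/-- The first differential of the action functional:
`DS_L(p)[ξ] = ∫_0^1 ( ∂L/∂q · ξ + ∂L/∂v · ξ' ) dt`. -/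
def dAct (Lq Lv : ℝ → E n → E n → E n) (p ξ : Hsp n) : ℝ :=
  ∫ t, (⟪Lq t (pathH p t) (p.2 t), pathH ξ t⟫ + ⟪Lv t (pathH p t) (p.2 t), ξ.2 t⟫) ∂μ01

/-- The second Gateaux differential of the action functional:
`d²S_L(p)[ξ,η] = ∫_0^1 ( ∂²L/∂v² ξ'·η' + ∂²L/∂v∂q ξ'·η + ∂²L/∂q∂v ξ·η' + ∂²L/∂q² ξ·η ) dt`. -/
def d2Act (Lvv Lqv Lqq : ℝ → E n → E n → (E n →L[ℝ] E n)) (p ξ η : Hsp n) : ℝ :=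
  ∫ t, (⟪Lvv t (pathH p t) (p.2 t) (ξ.2 t), η.2 t⟫
      + ⟪Lqv t (pathH p t) (p.2 t) (pathH ξ t), η.2 t⟫
      + ⟪Lqv t (pathH p t) (p.2 t) (pathH η t), ξ.2 t⟫
      + ⟪Lqq t (pathH p t) (p.2 t) (pathH ξ t), pathH η t⟫) ∂μ01

/-- The `H`-inner product `⟨(x,w),(y,z)⟩ = x·y + ⟨w,z⟩_{L²}`. -/
def innH (p q : Hsp n) : ℝ := ⟪p.1, q.1⟫ + ⟪p.2, q.2⟫

lemma pathH_add (p q : Hsp n) (t : ℝ) (_ht : t ∈ Set.Icc (0:ℝ) 1) :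
    pathH (p + q) t = pathH p t + pathH q t := by
  have hint : ∀ r : Hsp n, Integrable (r.2 : ℝ → E n) (μ01.restrict (Set.Ioc (0:ℝ) t)) :=
    fun r => ((Lp.memLp r.2).integrable (by norm_num)).restrict
  have h1 : (((p + q).2 : Lp (E n) 2 μ01) : ℝ → E n)
      =ᵐ[μ01.restrict (Set.Ioc (0:ℝ) t)] fun s => p.2 s + q.2 s :=
    ae_restrict_of_ae (Lp.coeFn_add p.2 q.2)
  have h2 : ∫ s in Set.Ioc (0:ℝ) t, (p + q).2 s ∂μ01
      = (∫ s in Set.Ioc (0:ℝ) t, p.2 s ∂μ01) + ∫ s in Set.Ioc (0:ℝ) t, q.2 s ∂μ01 := by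
    rw [integral_congr_ae h1]
    exact integral_add (hint p) (hint q)
  simp only [pathH, Prod.fst_add, h2]
  abel

lemma pathH_smul (c : ℝ) (p : Hsp n) (t : ℝ) (_ht : t ∈ Set.Icc (0:ℝ) 1) :
    pathH (c • p) t = c • pathH p t := by
  have h1 : (((c • p).2 : Lp (E n) 2 μ01) : ℝ → E n)
      =ᵐ[μ01.restrict (Set.Ioc (0:ℝ) t)] fun s => c • (p.2 s) :=
    ae_restrict_of_ae (Lp.coeFn_smul c p.2)
  have h2 : ∫ s in Set.Ioc (0:ℝ) t, (c • p).2 s ∂μ01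
      = c • ∫ s in Set.Ioc (0:ℝ) t, p.2 s ∂μ01 := by
    rw [integral_congr_ae h1]
    exact integral_smul c _
  simp only [pathH, Prod.smul_fst, h2, smul_add]

lemma pathH_zero (t : ℝ) (_ht : t ∈ Set.Icc (0:ℝ) 1) : pathH (0 : Hsp n) t = 0 := by
  have h1 : (((0 : Hsp n).2 : Lp (E n) 2 μ01) : ℝ → E n)
      =ᵐ[μ01.restrict (Set.Ioc (0:ℝ) t)] fun _ => (0 : E n) :=
    ae_restrict_of_ae (Lp.coeFn_zero (E n) 2 μ01)
  simp only [pathH]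
  rw [integral_congr_ae h1]
  simp

/-- The closed subspace `H_W = {(x,w) : (γ(0),γ(1)) ∈ W}` of `H`. -/
def HWsub (W : Submodule ℝ (E n × E n)) : Submodule ℝ (Hsp n) where
  carrier := {p | (pathH p 0, pathH p 1) ∈ W}
  add_mem' := by
    intro p q hp hq
    simp only [Set.mem_setOf_eq] at *
    rw [pathH_add p q 0 (by norm_num), pathH_add p q 1 (by norm_num)]
    exact W.add_mem hp hq
  zero_mem' := by
    simp only [Set.mem_setOf_eq]
    rw [pathH_zero 0 (by norm_num), pathH_zero 1 (by norm_num)]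
    exact W.zero_mem
  smul_mem' := by
    intro c p hp
    simp only [Set.mem_setOf_eq] at *
    rw [pathH_smul c p 0 (by norm_num), pathH_smul c p 1 (by norm_num)]
    exact W.smul_mem c hp

/-- The auxiliary inner product `⟨ξ,η⟩₀ = ∫ ∂²L/∂v²(t,0,0) ξ'·η' dt + ∫ ξ·η dt` on `H_W`. -/
def inn0 (Lvv : ℝ → E n → E n → (E n →L[ℝ] E n)) (ξ η : Hsp n) : ℝ :=
  (∫ t, ⟪Lvv t 0 0 (ξ.2 t), η.2 t⟫ ∂μ01) + ∫ t, ⟪pathH ξ t, pathH η t⟫ ∂μ01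

end

/-!
Test `DS_L` at `p_h` and at `p_k` against `ξ = p_h - p_k ∈ H_W` and subtract. Strong convexity of
`L` in `v` bounds `ℓ₂ ‖w_h - w_k‖²` by `DS_L(p_h)[ξ] - DS_L(p_k)[ξ] + δ K`, where `δ` is the uniform
distance of the paths `γ_h, γ_k` and `K` depends only on the bound of the sequence in `H`: the
remaining terms are controlled by the growth of `∂L/∂q` and the Lipschitz bound of `∂L/∂v` in `q`
that (L1') provides on a convex ball around the limit curve, which contains `γ_h(t)` and `γ_k(t)`
for large `h, k`. Both terms on the right are small, so `(w_h)` is Cauchy in `L²`, while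
`x_h = γ_h(0) → g(0)`; the limit lies in `H_W` because `H_W` is closed, and its path is `g`.
-/

instance : IsProbabilityMeasure μ01 :=
  ⟨by rw [Measure.restrict_apply_univ]; simp [Real.volume_Icc]⟩

namespace MeasureTheory.Lp

variable {α F : Type*} [MeasurableSpace α] {μ : Measure α} [NormedAddCommGroup F]

lemma integrable_norm_sq (u : Lp F 2 μ) : Integrable (fun t => ‖u t‖ ^ 2) μ :=
  (memLp_two_iff_integrable_sq_norm (Lp.aestronglyMeasurable u)).1 (Lp.memLp u)

lemma integral_norm_le_norm [IsProbabilityMeasure μ] (u : Lp F 2 μ) :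
    ∫ t, ‖u t‖ ∂μ ≤ ‖u‖ := by
  have hu := Lp.aestronglyMeasurable u
  rw [← lpNorm_one_eq_integral_norm hu, ← toReal_eLpNorm hu, Lp.norm_def]
  exact ENNReal.toReal_mono (Lp.eLpNorm_ne_top u) (eLpNorm_le_eLpNorm_of_exponent_le one_le_two hu)

lemma integral_norm_sq_eq_norm_sq [InnerProductSpace ℝ F] (u : Lp F 2 μ) :
    ∫ t, ‖u t‖ ^ 2 ∂μ = ‖u‖ ^ 2 := by
  simp only [← real_inner_self_eq_norm_sq, L2.inner_def]

end MeasureTheory.Lp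

section Calculus

variable {X Y : Type*} [NormedAddCommGroup X] [NormedSpace ℝ X]

lemma norm_le_norm_zero_add_of_hasFDerivAt [NormedAddCommGroup Y] [NormedSpace ℝ Y]
    {f : X → Y} {f' : X → X →L[ℝ] Y} {v : X} {C : ℝ}
    (hf : ∀ w, ‖w‖ ≤ ‖v‖ → HasFDerivAt f (f' w) w) (hC : ∀ w, ‖w‖ ≤ ‖v‖ → ‖f' w‖ ≤ C) :
    ‖f v‖ ≤ ‖f 0‖ + C * ‖v‖ := by
  have h := (convex_closedBall (0 : X) ‖v‖).norm_image_sub_le_of_norm_hasFDerivWithin_le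
    (fun w hw => (hf w (mem_closedBall_zero_iff.1 hw)).hasFDerivWithinAt)
    (fun w hw => hC w (mem_closedBall_zero_iff.1 hw))
    (Metric.mem_closedBall_self (norm_nonneg v)) (mem_closedBall_zero_iff.2 le_rfl)
  rw [sub_zero] at h
  linarith [norm_le_insert' (f v) (f 0)]

lemma mul_norm_sub_sq_le_inner_of_hasFDerivAt [NormedAddCommGroup Y] [InnerProductSpace ℝ Y]
    {f : Y → Y} {f' : Y → Y →L[ℝ] Y} {ℓ : ℝ} (hf : ∀ w, HasFDerivAt f (f' w) w)
    (hcoercive : ∀ w ξ, ℓ * ‖ξ‖ ^ 2 ≤ ⟪f' w ξ, ξ⟫) (a b : Y) :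
    ℓ * ‖a - b‖ ^ 2 ≤ ⟪f a - f b, a - b⟫ := by
  set d := a - b
  have hφ : ∀ s : ℝ, HasDerivAt (fun s : ℝ => ⟪f (b + s • d), d⟫) ⟪f' (b + s • d) d, d⟫ s := by
    intro s
    have hline : HasDerivAt (fun s : ℝ => b + s • d) d s := by
      simpa using ((hasDerivAt_id s).smul_const d).const_add b
    simpa using ((hf _).comp_hasDerivAt s hline).inner ℝ (hasDerivAt_const s d)
  have h := mul_sub_le_image_sub_of_le_deriv (fun s => (hφ s).differentiableAt)
    (fun s => (hφ s).deriv ▸ hcoercive _ d) zero_le_one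
  simpa [d, inner_sub_left] using h

lemma HasGradientAt.comp_const_add_zero [NormedAddCommGroup Y] [InnerProductSpace ℝ Y]
    [CompleteSpace Y] {f : Y → ℝ} {g a : Y} (h : HasGradientAt f g a) :
    HasGradientAt (fun x => f (a + x)) g 0 := by
  rw [hasGradientAt_iff_hasFDerivAt] at h ⊢
  exact (hasFDerivAt_comp_add_left a).2 (by simpa using h)

lemma ContDiffOn.continuousOn_of_hasGradientAt_comp [NormedAddCommGroup Y]
    [InnerProductSpace ℝ Y] [CompleteSpace Y] {F : X → ℝ} {s : Set X} (hF : ContDiffOn ℝ 1 F s)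
    (hs : IsOpen s) (ι : Y →L[ℝ] X) {G : X → Y}
    (hG : ∀ z ∈ s, HasGradientAt (fun e => F (z + ι e)) (G z) 0) : ContinuousOn G s := by
  have hrepr : ∀ z ∈ s, G z = (InnerProductSpace.toDual ℝ Y).symm ((fderiv ℝ F z).comp ι) := by
    intro z hz
    have hFz : HasFDerivAt F (fderiv ℝ F z) (z + ι 0) := by
      simpa using
        ((hF.differentiableOn one_ne_zero z hz).differentiableAt (hs.mem_nhds hz)).hasFDerivAt
    rw [← ((hG z hz).hasFDerivAt.unique (hFz.comp 0 (ι.hasFDerivAt.const_add z))),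
      LinearIsometryEquiv.symm_apply_apply]
  refine ContinuousOn.congr ?_ hrepr
  exact (InnerProductSpace.toDual ℝ Y).symm.continuous.comp_continuousOn
    ((hF.continuousOn_fderiv_of_isOpen hs le_rfl).clm_comp continuousOn_const)

lemma mul_norm_sub_sq_le_inner_sub_add [NormedAddCommGroup Y] [InnerProductSpace ℝ Y]
    {x y a b P₁ P₂ V₁ V₂ Vₘ : Y} {ℓ₁ ℓ₂ C₀ : ℝ} (hℓ₁ : 0 ≤ ℓ₁)
    (hmono : ℓ₂ * ‖a - b‖ ^ 2 ≤ ⟪V₁ - Vₘ, a - b⟫)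
    (hlip : ‖Vₘ - V₂‖ ≤ ℓ₁ * (1 + ‖b‖) * ‖x - y‖)
    (hP₁ : ‖P₁‖ ≤ C₀ + ℓ₁ * (‖a‖ + ‖a‖ ^ 2)) (hP₂ : ‖P₂‖ ≤ C₀ + ℓ₁ * (‖b‖ + ‖b‖ ^ 2)) :
    ℓ₂ * ‖a - b‖ ^ 2 ≤ (⟪P₁, x - y⟫ + ⟪V₁, a - b⟫) - (⟪P₂, x - y⟫ + ⟪V₂, a - b⟫)
      + ‖x - y‖ * (2 * C₀ + 4 * ℓ₁ * (1 + ‖a‖ ^ 2 + ‖b‖ ^ 2)) := by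
  have hP : -((‖P₁‖ + ‖P₂‖) * ‖x - y‖) ≤ ⟪P₁ - P₂, x - y⟫ :=
    neg_le_of_abs_le ((abs_real_inner_le_norm _ _).trans
      (mul_le_mul_of_nonneg_right (norm_sub_le _ _) (norm_nonneg _)))
  have hV : -(ℓ₁ * (1 + ‖b‖) * ‖x - y‖ * (‖a‖ + ‖b‖)) ≤ ⟪Vₘ - V₂, a - b⟫ :=
    neg_le_of_abs_le ((abs_real_inner_le_norm _ _).trans
      (mul_le_mul hlip (norm_sub_le _ _) (norm_nonneg _) (by positivity)))
  have hquad : (1 + ‖b‖) * (‖a‖ + ‖b‖) + (‖a‖ + ‖a‖ ^ 2 + ‖b‖ + ‖b‖ ^ 2)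
      ≤ 4 * (1 + ‖a‖ ^ 2 + ‖b‖ ^ 2) := by
    nlinarith [sq_nonneg (‖a‖ - ‖b‖), sq_nonneg (‖a‖ - 1), sq_nonneg (‖b‖ - 1)]
  have hG : (‖P₁‖ + ‖P₂‖) * ‖x - y‖ + ℓ₁ * (1 + ‖b‖) * ‖x - y‖ * (‖a‖ + ‖b‖)
      ≤ ‖x - y‖ * (2 * C₀ + 4 * ℓ₁ * (1 + ‖a‖ ^ 2 + ‖b‖ ^ 2)) := by
    have := mul_le_mul_of_nonneg_left hquad (mul_nonneg hℓ₁ (norm_nonneg (x - y)))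
    nlinarith [mul_le_mul_of_nonneg_right (add_le_add hP₁ hP₂) (norm_nonneg (x - y))]
  simp only [inner_sub_left] at hP hV hmono
  linarith

end Calculus

lemma ContinuousOn.aestronglyMeasurable_comp_of_ae_mem {α X Y : Type*} [MeasurableSpace α]
    {μ : Measure α} [TopologicalSpace X] [MeasurableSpace X] [OpensMeasurableSpace X]
    [TopologicalSpace Y] [TopologicalSpace.PseudoMetrizableSpace Y] [SecondCountableTopology Y]
    {Φ : X → Y} {s : Set X} (hΦ : ContinuousOn Φ s) (hs : MeasurableSet s) {f : α → X}
    (hf : AEMeasurable f μ) (hfs : ∀ᵐ a ∂μ, f a ∈ s) : AEStronglyMeasurable (Φ ∘ f) μ := by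
  have hmap : (μ.map f).restrict s = μ.map f :=
    Measure.restrict_eq_self_of_ae_mem ((ae_map_iff hf hs).2 hfs)
  exact (hmap ▸ hΦ.aestronglyMeasurable hs).comp_aemeasurable hf

lemma cauchySeq_of_mul_sq_dist_le_sub {X Y : Type*} [NormedAddCommGroup X] [PseudoMetricSpace Y]
    {V : AddSubgroup X} (D : ℕ → X → ℝ) {x : ℕ → X} {u : ℕ → Y} {R K ℓ : ℝ} (hℓ : 0 < ℓ)
    (hxV : ∀ h, x h ∈ V) (hxR : ∀ h, ‖x h‖ ≤ R)
    (hD : ∀ ε > (0:ℝ), ∃ N : ℕ, ∀ h ≥ N, ∀ ξ ∈ V, |D h ξ| ≤ ε * ‖ξ‖)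
    (hmono : ∀ δ > (0:ℝ), ∃ N : ℕ, ∀ h ≥ N, ∀ k ≥ N,
      ℓ * dist (u h) (u k) ^ 2 ≤ D h (x h - x k) - D k (x h - x k) + δ * K) :
    CauchySeq u := by
  rw [Metric.cauchySeq_iff']
  intro ε hε
  have hR : 0 ≤ R := (norm_nonneg _).trans (hxR 0)
  set η := ℓ * ε ^ 2 / 4 with hη
  have hηpos : 0 < η := by positivity
  obtain ⟨N₁, hN₁⟩ := hD (η / (4 * R + 1)) (by positivity)
  obtain ⟨N₂, hN₂⟩ := hmono (η / (|K| + 1)) (by positivity)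
  refine ⟨max N₁ N₂, fun h hh => ?_⟩
  set N := max N₁ N₂
  have hξV : x h - x N ∈ V := V.sub_mem (hxV h) (hxV N)
  have hξR : ‖x h - x N‖ ≤ 2 * R := (norm_sub_le _ _).trans (by linarith [hxR h, hxR N])
  have hDsmall : ∀ k ≥ N, |D k (x h - x N)| ≤ η / 2 := fun k hk =>
    calc |D k (x h - x N)| ≤ η / (4 * R + 1) * ‖x h - x N‖ :=
          hN₁ k (le_of_max_le_left hk) _ hξV
      _ ≤ η / (4 * R + 1) * (2 * R) := by gcongr
      _ ≤ η / 2 := by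
          rw [div_mul_eq_mul_div, div_le_div_iff₀ (by positivity) two_pos]; nlinarith
  have hK : η / (|K| + 1) * K ≤ η / 2 + η / 2 := by
    rw [div_mul_eq_mul_div, div_le_iff₀ (by positivity)]
    nlinarith [le_abs_self K, abs_nonneg K]
  have hsq : ℓ * dist (u h) (u N) ^ 2 < ℓ * ε ^ 2 := by
    linarith [hN₂ h (le_of_max_le_right hh) N (le_max_right _ _), abs_le.1 (hDsmall h hh),
      abs_le.1 (hDsmall N le_rfl)]
  exact (pow_lt_pow_iff_left₀ dist_nonneg hε.le two_ne_zero).1 (lt_of_mul_lt_mul_left hsq hℓ.le)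

lemma exists_pos_forall_ball_subset {X : Type*} [PseudoMetricSpace X] {U : Set X} {g : ℝ → X}
    {s : Set ℝ} (hs : IsCompact s) (hg : ContinuousOn g s) (hU : IsOpen U)
    (hgU : ∀ t ∈ s, g t ∈ U) : ∃ ρ > 0, ∀ t ∈ s, Metric.ball (g t) ρ ⊆ U := by
  obtain ⟨ρ, hρ, hρU⟩ := (hs.image_of_continuousOn hg).exists_thickening_subset_open hU
    (by rintro _ ⟨t, ht, rfl⟩; exact hgU t ht)
  exact ⟨ρ, hρ, fun t ht => (Metric.ball_subset_thickening (mem_image_of_mem g ht) ρ).trans hρU⟩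

lemma TendstoUniformlyOn.eventually_segment_subset {X : Type*} [NormedAddCommGroup X]
    [NormedSpace ℝ X] {U : Set X} {F : ℕ → ℝ → X} {g : ℝ → X} {s : Set ℝ}
    (hF : TendstoUniformlyOn F g atTop s) (hs : IsCompact s) (hg : ContinuousOn g s)
    (hU : IsOpen U) (hgU : ∀ t ∈ s, g t ∈ U) {δ : ℝ} (hδ : 0 < δ) :
    ∃ N : ℕ, ∀ h ≥ N, ∀ k ≥ N, ∀ t ∈ s,
      segment ℝ (F k t) (F h t) ⊆ U ∧ ‖F h t - F k t‖ ≤ δ := by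
  obtain ⟨ρ, hρ, hρU⟩ := exists_pos_forall_ball_subset hs hg hU hgU
  obtain ⟨N, hN⟩ := eventually_atTop.1
    (Metric.tendstoUniformlyOn_iff.1 hF (min ρ (δ / 2)) (lt_min hρ (half_pos hδ)))
  have hclose : ∀ h ≥ N, ∀ t ∈ s, dist (F h t) (g t) < min ρ (δ / 2) := fun h hh t ht => by
    rw [dist_comm]; exact hN h hh t ht
  refine ⟨N, fun h hh k hk t ht => ⟨?_, ?_⟩⟩
  · refine ((convex_ball (g t) ρ).segment_subset ?_ ?_).trans (hρU t ht) <;>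
      exact (hclose _ ‹_› t ht).trans_le (min_le_left _ _)
  · rw [← dist_eq_norm]
    linarith [dist_triangle_right (F h t) (F k t) (g t), (hclose h hh t ht).trans_le
      (min_le_right _ _), (hclose k hk t ht).trans_le (min_le_right _ _)]

section Paths

variable {n : ℕ}

lemma pathH_apply_zero (p : Hsp n) : pathH p 0 = p.1 := by
  simp [pathH]

lemma pathH_sub (p q : Hsp n) {t : ℝ} (ht : t ∈ Icc (0:ℝ) 1) :
    pathH (p - q) t = pathH p t - pathH q t := by
  rw [sub_eq_add_neg, ← neg_one_smul ℝ q, pathH_add _ _ t ht, pathH_smul _ _ t ht, neg_one_smul,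
    sub_eq_add_neg]

lemma norm_pathH_le (p : Hsp n) (t : ℝ) : ‖pathH p t‖ ≤ ‖p.1‖ + ‖p.2‖ := by
  have hint : Integrable (fun s => ‖p.2 s‖) μ01 := ((Lp.memLp p.2).integrable one_le_two).norm
  calc ‖pathH p t‖ ≤ ‖p.1‖ + ∫ s in Ioc 0 t, ‖p.2 s‖ ∂μ01 :=
        (norm_add_le _ _).trans (add_le_add_right (norm_integral_le_integral_norm _) _)
    _ ≤ ‖p.1‖ + ∫ s, ‖p.2 s‖ ∂μ01 := add_le_add_right
        (setIntegral_le_integral hint (Eventually.of_forall fun _ => norm_nonneg _)) _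
    _ ≤ ‖p.1‖ + ‖p.2‖ := add_le_add_right (Lp.integral_norm_le_norm _) _

lemma lipschitzWith_pathH {t : ℝ} (ht : t ∈ Icc (0:ℝ) 1) :
    LipschitzWith 2 fun p : Hsp n => pathH p t := by
  refine LipschitzWith.of_dist_le_mul fun p q => ?_
  rw [dist_eq_norm, dist_eq_norm, ← pathH_sub p q ht]
  calc ‖pathH (p - q) t‖ ≤ ‖(p - q).1‖ + ‖(p - q).2‖ := norm_pathH_le _ _
    _ ≤ 2 * ‖p - q‖ := by linarith [norm_fst_le (p - q), norm_snd_le (p - q)]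

lemma continuousOn_pathH (p : Hsp n) : ContinuousOn (pathH p) (Icc 0 1) :=
  continuousOn_const.add (intervalIntegral.continuousOn_primitive
    ((Lp.memLp p.2).integrable one_le_two).integrableOn)

lemma isClosed_HWsub (W : Submodule ℝ (E n × E n)) : IsClosed (HWsub W : Set (Hsp n)) :=
  W.closed_of_finiteDimensional.preimage
    ((lipschitzWith_pathH ⟨le_rfl, zero_le_one⟩).continuous.prodMk
      (lipschitzWith_pathH ⟨zero_le_one, le_rfl⟩).continuous)

lemma aestronglyMeasurable_comp_pathH {U : Set (E n)} (hU : IsOpen U) {Φ : ℝ × E n × E n → E n}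
    (hΦ : ContinuousOn Φ (univ ×ˢ U ×ˢ univ)) {p : Hsp n} (hp : p ∈ actO U) :
    AEStronglyMeasurable (fun t => Φ (t, pathH p t, p.2 t)) μ01 :=
  hΦ.aestronglyMeasurable_comp_of_ae_mem (isOpen_univ.prod (hU.prod isOpen_univ)).measurableSet
    (aemeasurable_id.prodMk
      (((continuousOn_pathH p).aestronglyMeasurable measurableSet_Icc).aemeasurable.prodMk
        (Lp.aestronglyMeasurable p.2).aemeasurable))
    (by filter_upwards [ae_restrict_mem measurableSet_Icc] with t ht
        exact ⟨mem_univ _, hp t ht, mem_univ _⟩)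

lemma exists_tendsto_of_cauchySeq_snd {ps : ℕ → Hsp n} {g : ℝ → E n}
    (hcauchy : CauchySeq fun h => (ps h).2)
    (hg : ∀ t ∈ Icc (0:ℝ) 1, Tendsto (fun h => pathH (ps h) t) atTop (𝓝 (g t))) :
    ∃ p : Hsp n, Tendsto ps atTop (𝓝 p) ∧ ∀ t ∈ Icc (0:ℝ) 1, pathH p t = g t := by
  obtain ⟨u, hu⟩ := cauchySeq_tendsto_of_complete hcauchy
  have hfst : Tendsto (fun h => (ps h).1) atTop (𝓝 (g 0)) := by
    simpa only [pathH_apply_zero] using hg 0 ⟨le_rfl, zero_le_one⟩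
  have hps : Tendsto ps atTop (𝓝 (g 0, u)) := hfst.prodMk_nhds hu
  exact ⟨_, hps, fun t ht =>
    tendsto_nhds_unique (((lipschitzWith_pathH ht).continuous.tendsto _).comp hps) (hg t ht)⟩

end Paths

section Lagrangian

variable {n : ℕ}

structure LagrangianBounds (U : Set (E n)) (Lq Lv : ℝ → E n → E n → E n) (ℓ₁ ℓ₂ C₀ : ℝ) :
    Prop where
  ℓ₁_nonneg : 0 ≤ ℓ₁
  aestronglyMeasurable_Lq :
    ∀ p ∈ actO U, AEStronglyMeasurable (fun t => Lq t (pathH p t) (p.2 t)) μ01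
  aestronglyMeasurable_Lv :
    ∀ p ∈ actO U, AEStronglyMeasurable (fun t => Lv t (pathH p t) (p.2 t)) μ01
  norm_Lq_le : ∀ t ∈ Icc (0:ℝ) 1, ∀ q ∈ U, ∀ v, ‖Lq t q v‖ ≤ C₀ + ℓ₁ * (‖v‖ + ‖v‖ ^ 2)
  norm_Lv_le : ∀ t ∈ Icc (0:ℝ) 1, ∀ q ∈ U, ∀ v, ‖Lv t q v‖ ≤ C₀ + ℓ₁ * ‖v‖
  mul_norm_sub_sq_le : ∀ t ∈ Icc (0:ℝ) 1, ∀ q ∈ U, ∀ a b,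
    ℓ₂ * ‖a - b‖ ^ 2 ≤ ⟪Lv t q a - Lv t q b, a - b⟫
  norm_Lv_sub_le : ∀ t ∈ Icc (0:ℝ) 1, ∀ q₁ q₂, segment ℝ q₂ q₁ ⊆ U → ∀ v,
    ‖Lv t q₁ v - Lv t q₂ v‖ ≤ ℓ₁ * (1 + ‖v‖) * ‖q₁ - q₂‖

lemma LagrangianBounds.of_hessian_bounds {U : Set (E n)} (hU : IsOpen U)
    {L : ℝ → E n → E n → ℝ} {Lq Lv : ℝ → E n → E n → E n}
    {Lvv Lqv Lvq : ℝ → E n → E n → (E n →L[ℝ] E n)}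
    (hL : ContDiffOn ℝ 1 (fun z : ℝ × E n × E n => L z.1 z.2.1 z.2.2) (univ ×ˢ U ×ˢ univ))
    (hLq : ∀ t, ∀ q ∈ U, ∀ v, HasGradientAt (fun q' => L t q' v) (Lq t q v) q)
    (hLv : ∀ t, ∀ q ∈ U, ∀ v, HasGradientAt (fun v' => L t q v') (Lv t q v) v)
    (hLvv : ∀ t, ∀ q ∈ U, ∀ v, HasFDerivAt (fun v' => Lv t q v') (Lvv t q v) v)
    (hLqv : ∀ t, ∀ q ∈ U, ∀ v, HasFDerivAt (fun q' => Lv t q' v) (Lqv t q v) q)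
    (hLvq : ∀ t, ∀ q ∈ U, ∀ v, HasFDerivAt (fun v' => Lq t q v') (Lvq t q v) v)
    {ℓ₁ ℓ₂ C₀ : ℝ} (hℓ₁ : 0 ≤ ℓ₁)
    (hLvv_le : ∀ t ∈ Icc (0:ℝ) 1, ∀ q ∈ U, ∀ v, ‖Lvv t q v‖ ≤ ℓ₁)
    (hLqv_le : ∀ t ∈ Icc (0:ℝ) 1, ∀ q ∈ U, ∀ v, ‖Lqv t q v‖ ≤ ℓ₁ * (1 + ‖v‖))
    (hLvq_le : ∀ t ∈ Icc (0:ℝ) 1, ∀ q ∈ U, ∀ v, ‖Lvq t q v‖ ≤ ℓ₁ * (1 + ‖v‖))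
    (hL2 : ∀ t ∈ Icc (0:ℝ) 1, ∀ q ∈ U, ∀ v ξ, ℓ₂ * ‖ξ‖ ^ 2 ≤ ⟪Lvv t q v ξ, ξ⟫)
    (hC₀ : ∀ t ∈ Icc (0:ℝ) 1, ∀ q ∈ U, ‖Lq t q 0‖ ≤ C₀ ∧ ‖Lv t q 0‖ ≤ C₀) :
    LagrangianBounds U Lq Lv ℓ₁ ℓ₂ C₀ where
  ℓ₁_nonneg := hℓ₁
  aestronglyMeasurable_Lq _ hp := by
    refine aestronglyMeasurable_comp_pathH hU (Φ := fun z => Lq z.1 z.2.1 z.2.2) ?_ hp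
    refine hL.continuousOn_of_hasGradientAt_comp (isOpen_univ.prod (hU.prod isOpen_univ))
      ((ContinuousLinearMap.inr ℝ ℝ _).comp (ContinuousLinearMap.inl ℝ _ (E n))) fun z hz => ?_
    simpa using (hLq z.1 z.2.1 hz.2.1 z.2.2).comp_const_add_zero
  aestronglyMeasurable_Lv _ hp := by
    refine aestronglyMeasurable_comp_pathH hU (Φ := fun z => Lv z.1 z.2.1 z.2.2) ?_ hp
    refine hL.continuousOn_of_hasGradientAt_comp (isOpen_univ.prod (hU.prod isOpen_univ))
      ((ContinuousLinearMap.inr ℝ ℝ _).comp (ContinuousLinearMap.inr ℝ (E n) _)) fun z hz => ?_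
    simpa using (hLv z.1 z.2.1 hz.2.1 z.2.2).comp_const_add_zero
  norm_Lq_le t ht q hq v := by
    have h := norm_le_norm_zero_add_of_hasFDerivAt (fun w _ => hLvq t q hq w)
      (C := ℓ₁ * (1 + ‖v‖)) fun w hw => (hLvq_le t ht q hq w).trans (by gcongr)
    linarith [(hC₀ t ht q hq).1]
  norm_Lv_le t ht q hq v := by
    have h := norm_le_norm_zero_add_of_hasFDerivAt (v := v) (fun w _ => hLvv t q hq w)
      fun w _ => hLvv_le t ht q hq w
    linarith [(hC₀ t ht q hq).2]
  mul_norm_sub_sq_le t ht q hq :=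
    mul_norm_sub_sq_le_inner_of_hasFDerivAt (hLvv t q hq) (hL2 t ht q hq)
  norm_Lv_sub_le t ht q₁ q₂ hseg v :=
    (convex_segment q₂ q₁).norm_image_sub_le_of_norm_hasFDerivWithin_le
      (fun z hz => (hLqv t z (hseg hz) v).hasFDerivWithinAt)
      (fun z hz => hLqv_le t ht z (hseg hz) v) (left_mem_segment ℝ q₂ q₁)
      (right_mem_segment ℝ q₂ q₁)

variable {U : Set (E n)} {Lq Lv : ℝ → E n → E n → E n} {ℓ₁ ℓ₂ C₀ : ℝ}

noncomputable def dActIntegrand (Lq Lv : ℝ → E n → E n → E n) (p ξ : Hsp n) (t : ℝ) : ℝ :=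
  ⟪Lq t (pathH p t) (p.2 t), pathH ξ t⟫ + ⟪Lv t (pathH p t) (p.2 t), ξ.2 t⟫

lemma LagrangianBounds.integrable_dActIntegrand (hB : LagrangianBounds U Lq Lv ℓ₁ ℓ₂ C₀)
    {p : Hsp n} (hp : p ∈ actO U) (ξ : Hsp n) : Integrable (dActIntegrand Lq Lv p ξ) μ01 := by
  have hIcc : ∀ᵐ t ∂μ01, t ∈ Icc (0:ℝ) 1 := ae_restrict_mem measurableSet_Icc
  have hw : Integrable (fun t => ‖p.2 t‖) μ01 := ((Lp.memLp p.2).integrable one_le_two).norm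
  refine Integrable.add ?_ ?_
  · refine Integrable.mono'
      (((integrable_const C₀).add ((hw.add (Lp.integrable_norm_sq p.2)).const_mul ℓ₁)).mul_const
        (‖ξ.1‖ + ‖ξ.2‖))
      ((hB.aestronglyMeasurable_Lq p hp).inner
        ((continuousOn_pathH ξ).aestronglyMeasurable measurableSet_Icc)) ?_
    filter_upwards [hIcc] with t ht
    have hLq := hB.norm_Lq_le t ht _ (hp t ht) (p.2 t)
    rw [Real.norm_eq_abs]
    exact (abs_real_inner_le_norm _ _).trans
      (mul_le_mul hLq (norm_pathH_le ξ t) (norm_nonneg _) ((norm_nonneg _).trans hLq))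
  · have hmem : MemLp (fun t => Lv t (pathH p t) (p.2 t)) 2 μ01 := by
      refine MemLp.of_le ((memLp_const C₀).add ((Lp.memLp p.2).norm.const_mul ℓ₁))
        (hB.aestronglyMeasurable_Lv p hp) ?_
      filter_upwards [hIcc] with t ht
      exact (hB.norm_Lv_le t ht _ (hp t ht) (p.2 t)).trans (le_abs_self _)
    refine (L2.integrable_inner (hmem.toLp _) ξ.2).congr ?_
    filter_upwards [hmem.coeFn_toLp] with t ht
    rw [ht]

lemma LagrangianBounds.mul_norm_sub_sq_le_dAct_sub (hB : LagrangianBounds U Lq Lv ℓ₁ ℓ₂ C₀)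
    {p q : Hsp n} {δ : ℝ} (hseg : ∀ t ∈ Icc (0:ℝ) 1, segment ℝ (pathH q t) (pathH p t) ⊆ U)
    (hδ : ∀ t ∈ Icc (0:ℝ) 1, ‖pathH p t - pathH q t‖ ≤ δ) :
    ℓ₂ * ‖p.2 - q.2‖ ^ 2 ≤ dAct Lq Lv p (p - q) - dAct Lq Lv q (p - q)
      + δ * (2 * C₀ + 4 * ℓ₁ * (1 + ‖p.2‖ ^ 2 + ‖q.2‖ ^ 2)) := by
  have hp : p ∈ actO U := fun t ht => hseg t ht (right_mem_segment ℝ _ _)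
  have hq : q ∈ actO U := fun t ht => hseg t ht (left_mem_segment ℝ _ _)
  set G : ℝ → ℝ := fun t => 2 * C₀ + 4 * ℓ₁ * (1 + ‖p.2 t‖ ^ 2 + ‖q.2 t‖ ^ 2)
  have hp2 := Lp.integrable_norm_sq p.2
  have hq2 := Lp.integrable_norm_sq q.2
  have h1 : Integrable (fun t => 1 + ‖p.2 t‖ ^ 2) μ01 := (integrable_const 1).add hp2
  have h2 : Integrable (fun t => 4 * ℓ₁ * (1 + ‖p.2 t‖ ^ 2 + ‖q.2 t‖ ^ 2)) μ01 :=
    (h1.add hq2).const_mul _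
  have hG : Integrable G μ01 := (integrable_const _).add h2
  have hGint : ∫ t, G t ∂μ01 = 2 * C₀ + 4 * ℓ₁ * (1 + ‖p.2‖ ^ 2 + ‖q.2‖ ^ 2) := by
    rw [integral_add (integrable_const _) h2, integral_const_mul (4 * ℓ₁), integral_add h1 hq2,
      integral_add (integrable_const 1) hp2, Lp.integral_norm_sq_eq_norm_sq,
      Lp.integral_norm_sq_eq_norm_sq]
    simp
  have hpt : ∀ᵐ t ∂μ01, ℓ₂ * ‖(p - q).2 t‖ ^ 2 ≤
      dActIntegrand Lq Lv p (p - q) t - dActIntegrand Lq Lv q (p - q) t + δ * G t := by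
    filter_upwards [ae_restrict_mem measurableSet_Icc, Lp.coeFn_sub p.2 q.2] with t ht hsub
    have hGt : 0 ≤ G t := by
      have hC₀ : 0 ≤ C₀ := by simpa using (norm_nonneg _).trans (hB.norm_Lq_le t ht _ (hp t ht) 0)
      have := hB.ℓ₁_nonneg
      positivity
    simp only [dActIntegrand, Prod.snd_sub, hsub, Pi.sub_apply, pathH_sub p q ht]
    refine (mul_norm_sub_sq_le_inner_sub_add hB.ℓ₁_nonneg
      (hB.mul_norm_sub_sq_le t ht _ (hp t ht) (p.2 t) (q.2 t))
      (hB.norm_Lv_sub_le t ht _ _ (hseg t ht) (q.2 t))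
      (hB.norm_Lq_le t ht _ (hp t ht) (p.2 t)) (hB.norm_Lq_le t ht _ (hq t ht) (q.2 t))).trans ?_
    gcongr
    exact hδ t ht
  have hIp := hB.integrable_dActIntegrand hp (p - q)
  have hIq := hB.integrable_dActIntegrand hq (p - q)
  calc ℓ₂ * ‖p.2 - q.2‖ ^ 2 = ∫ t, ℓ₂ * ‖(p - q).2 t‖ ^ 2 ∂μ01 := by
        rw [integral_const_mul, Lp.integral_norm_sq_eq_norm_sq]; rfl
    _ ≤ ∫ t, (dActIntegrand Lq Lv p (p - q) t - dActIntegrand Lq Lv q (p - q) t + δ * G t) ∂μ01 :=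
        integral_mono_ae ((Lp.integrable_norm_sq _).const_mul _)
          ((hIp.sub hIq).add (hG.const_mul δ)) hpt
    _ = _ := by
        rw [integral_add (hIp.sub hIq : Integrable (fun t => _ - _) μ01) (hG.const_mul δ),
          integral_sub hIp hIq, integral_const_mul, hGint]
        rfl

end Lagrangian

theorem palais_smale_localized_general
    {n : ℕ} (U : Set (E n)) (hU : IsOpen U)
    (L : ℝ → E n → E n → ℝ)
    (Lq Lv : ℝ → E n → E n → E n)
    (Lvv Lqv Lvq Lqq : ℝ → E n → E n → (E n →L[ℝ] E n))
    (hL : ContDiffOn ℝ ∞ (fun z : ℝ × E n × E n => L z.1 z.2.1 z.2.2)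
      (Set.univ ×ˢ U ×ˢ Set.univ))
    (hLq : ∀ (t : ℝ), ∀ q ∈ U, ∀ v : E n, HasGradientAt (fun q' => L t q' v) (Lq t q v) q)
    (hLv : ∀ (t : ℝ), ∀ q ∈ U, ∀ v : E n, HasGradientAt (fun v' => L t q v') (Lv t q v) v)
    (hLvv : ∀ (t : ℝ), ∀ q ∈ U, ∀ v : E n, HasFDerivAt (fun v' => Lv t q v') (Lvv t q v) v)
    (hLqv : ∀ (t : ℝ), ∀ q ∈ U, ∀ v : E n, HasFDerivAt (fun q' => Lv t q' v) (Lqv t q v) q)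
    (hLvq : ∀ (t : ℝ), ∀ q ∈ U, ∀ v : E n, HasFDerivAt (fun v' => Lq t q v') (Lvq t q v) v)
    (ℓ₁ : ℝ) (hℓ₁ : 0 < ℓ₁)
    (hL1 : ∀ t ∈ Set.Icc (0:ℝ) 1, ∀ q ∈ U, ∀ v : E n,
      ‖Lvv t q v‖ ≤ ℓ₁ ∧ ‖Lqv t q v‖ ≤ ℓ₁ * (1 + ‖v‖) ∧ ‖Lvq t q v‖ ≤ ℓ₁ * (1 + ‖v‖)
        ∧ ‖Lqq t q v‖ ≤ ℓ₁ * (1 + ‖v‖ ^ 2))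
    (ℓ₂ : ℝ) (hℓ₂ : 0 < ℓ₂)
    (hL2 : ∀ t ∈ Set.Icc (0:ℝ) 1, ∀ q ∈ U, ∀ v ξ : E n, ℓ₂ * ‖ξ‖ ^ 2 ≤ ⟪Lvv t q v ξ, ξ⟫)
    (C₀ : ℝ) (hC₀ : ∀ t ∈ Set.Icc (0:ℝ) 1, ∀ q ∈ U, ‖Lq t q 0‖ ≤ C₀ ∧ ‖Lv t q 0‖ ≤ C₀)
    (W : Submodule ℝ (E n × E n)) (ps : ℕ → Hsp n)
    (hpsW : ∀ h, ps h ∈ HWsub W)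
    (R : ℝ) (hR : ∀ h, ‖ps h‖ ≤ R)
    (g : ℝ → E n) (hgC : ContinuousOn g (Set.Icc (0:ℝ) 1))
    (hgU : ∀ t ∈ Set.Icc (0:ℝ) 1, g t ∈ U)
    (hunif : TendstoUniformlyOn (fun h t => pathH (ps h) t) g atTop (Set.Icc (0:ℝ) 1))
    (hsmall : ∀ ε > (0:ℝ), ∃ N : ℕ, ∀ h ≥ N, ∀ ξ : Hsp n, ξ ∈ HWsub W →
      |dAct Lq Lv (ps h) ξ| ≤ ε * ‖ξ‖) :
    ∃ p : Hsp n, p ∈ actO U ∧ p ∈ HWsub W ∧ Tendsto ps atTop (𝓝 p) ∧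
      ∀ t ∈ Set.Icc (0:ℝ) 1, pathH p t = g t := by
  have hB : LagrangianBounds U Lq Lv ℓ₁ ℓ₂ C₀ :=
    .of_hessian_bounds hU (hL.of_le (by exact_mod_cast le_top)) hLq hLv hLvv hLqv hLvq hℓ₁.le
      (fun t ht q hq v => (hL1 t ht q hq v).1) (fun t ht q hq v => (hL1 t ht q hq v).2.1)
      (fun t ht q hq v => (hL1 t ht q hq v).2.2.1) hL2 hC₀
  have hcauchy : CauchySeq fun h => (ps h).2 := by
    refine cauchySeq_of_mul_sq_dist_le_sub (V := (HWsub W).toAddSubgroup)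
      (fun h => dAct Lq Lv (ps h)) (K := 2 * C₀ + 4 * ℓ₁ * (1 + R ^ 2 + R ^ 2)) hℓ₂ hpsW hR
      hsmall fun δ hδ => ?_
    obtain ⟨N, hN⟩ := hunif.eventually_segment_subset isCompact_Icc hgC hU hgU hδ
    refine ⟨N, fun h hh k hk => ?_⟩
    rw [dist_eq_norm]
    refine (hB.mul_norm_sub_sq_le_dAct_sub (fun t ht => (hN h hh k hk t ht).1)
      (fun t ht => (hN h hh k hk t ht).2)).trans ?_
    have := hℓ₁.le
    gcongr <;> exact (norm_snd_le _).trans (hR _)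
  obtain ⟨p, hp, hpg⟩ := exists_tendsto_of_cauchySeq_snd hcauchy fun t ht => hunif.tendsto_at ht
  exact ⟨p, fun t ht => hpg t ht ▸ hgU t ht,
    (isClosed_HWsub W).mem_of_tendsto hp (Eventually.of_forall hpsW), hp, hpg⟩

/-- (Palais–Smale, localized.) A bounded sequence in `𝒪 ∩ H_W` whose paths
converge uniformly to a curve in `U` and along which the dual norm of `DS_L^W` tends to zero
converges strongly in `H` to an element of `𝒪 ∩ H_W` whose path is the uniform limit. -/
theorem palais_smale_localized
    {n : ℕ} (U : Set (E n)) (hU : IsOpen U)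
    (L : ℝ → E n → E n → ℝ)
    (Lq Lv : ℝ → E n → E n → E n)
    (Lvv Lqv Lvq Lqq : ℝ → E n → E n → (E n →L[ℝ] E n))
    (hL : ContDiffOn ℝ ∞ (fun z : ℝ × E n × E n => L z.1 z.2.1 z.2.2)
      (Set.univ ×ˢ U ×ˢ Set.univ))
    (hLq : ∀ (t : ℝ), ∀ q ∈ U, ∀ v : E n, HasGradientAt (fun q' => L t q' v) (Lq t q v) q)
    (hLv : ∀ (t : ℝ), ∀ q ∈ U, ∀ v : E n, HasGradientAt (fun v' => L t q v') (Lv t q v) v)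
    (hLvv : ∀ (t : ℝ), ∀ q ∈ U, ∀ v : E n, HasFDerivAt (fun v' => Lv t q v') (Lvv t q v) v)
    (hLqv : ∀ (t : ℝ), ∀ q ∈ U, ∀ v : E n, HasFDerivAt (fun q' => Lv t q' v) (Lqv t q v) q)
    (hLvq : ∀ (t : ℝ), ∀ q ∈ U, ∀ v : E n, HasFDerivAt (fun v' => Lq t q v') (Lvq t q v) v)
    (hLqq : ∀ (t : ℝ), ∀ q ∈ U, ∀ v : E n, HasFDerivAt (fun q' => Lq t q' v) (Lqq t q v) q)
    (ℓ₁ : ℝ) (hℓ₁ : 0 < ℓ₁)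
    (hL1 : ∀ t ∈ Set.Icc (0:ℝ) 1, ∀ q ∈ U, ∀ v : E n,
      ‖Lvv t q v‖ ≤ ℓ₁ ∧ ‖Lqv t q v‖ ≤ ℓ₁ * (1 + ‖v‖) ∧ ‖Lvq t q v‖ ≤ ℓ₁ * (1 + ‖v‖)
        ∧ ‖Lqq t q v‖ ≤ ℓ₁ * (1 + ‖v‖ ^ 2))
    (ℓ₂ : ℝ) (hℓ₂ : 0 < ℓ₂)
    (hL2 : ∀ t ∈ Set.Icc (0:ℝ) 1, ∀ q ∈ U, ∀ v ξ : E n, ℓ₂ * ‖ξ‖ ^ 2 ≤ ⟪Lvv t q v ξ, ξ⟫)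
    (C₀ : ℝ) (hC₀ : ∀ t ∈ Set.Icc (0:ℝ) 1, ∀ q ∈ U, ‖Lq t q 0‖ ≤ C₀ ∧ ‖Lv t q 0‖ ≤ C₀)
    (W : Submodule ℝ (E n × E n)) (ps : ℕ → Hsp n)
    (hpsO : ∀ h, ps h ∈ actO U) (hpsW : ∀ h, ps h ∈ HWsub W)
    (R : ℝ) (hR : ∀ h, ‖ps h‖ ≤ R)
    (g : ℝ → E n) (hgC : ContinuousOn g (Set.Icc (0:ℝ) 1))
    (hgU : ∀ t ∈ Set.Icc (0:ℝ) 1, g t ∈ U)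
    (hunif : TendstoUniformlyOn (fun h t => pathH (ps h) t) g atTop (Set.Icc (0:ℝ) 1))
    (hsmall : ∀ ε > (0:ℝ), ∃ N : ℕ, ∀ h ≥ N, ∀ ξ : Hsp n, ξ ∈ HWsub W →
      |dAct Lq Lv (ps h) ξ| ≤ ε * ‖ξ‖) :
    ∃ p : Hsp n, p ∈ actO U ∧ p ∈ HWsub W ∧ Tendsto ps atTop (𝓝 p) ∧
      ∀ t ∈ Set.Icc (0:ℝ) 1, pathH p t = g t :=
  palais_smale_localized_general U hU L Lq Lv Lvv Lqv Lvq Lqq hL hLq hLv hLvv hLqv hLvq ℓ₁ hℓ₁ hL1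
    ℓ₂ hℓ₂ hL2 C₀ hC₀ W ps hpsW R hR g hgC hgU hunif hsmall
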